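/- For a three-form P on a six-dimensional complex vector space, the map κ^{(2)}_P : ∧^2 V → V* ⊗ ∧^6 V*, α ↦ ⋆(ι_α P ∧ P), vanishes identically if and only if P is decomposable (a single Slater determinant). -/

import Mathlib

/-- Antisymmetry of the components of a three-form. -/
def Antisym3 {N : ℕ} (P : Fin N → Fin N → Fin N → ℂ) : Prop :=
  (∀ i j k, P i j k = -P j i k) ∧ (∀ i j k, P i j k = -P i k j)

/-- for a three-form `P` on `V = ℂ^6`, the map
`κ^{(2)}_P : ∧²V → ..., α ↦ ι_α P ∧ P` vanishes identically — i.e. for every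
antisymmetric bivector `α` the four-form `ι_α P ∧ P` with one-form part
`(ι_α P)_c = (1/2) α^{ab} P_{abc}` is zero — if and only if `P` is decomposable,
`P = a ∧ b ∧ c` for some one-forms `a, b, c` (a single Slater determinant). -/
theorem kappa2_vanishes_iff_decomposable (P : Fin 6 → Fin 6 → Fin 6 → ℂ)
    (hP : Antisym3 P) :
    (∀ α : Fin 6 → Fin 6 → ℂ, (∀ a b, α a b = -α b a) →
      ∀ i j k l : Fin 6,
        (∑ a, ∑ b, (1/2 : ℂ) * α a b * P a b i) * P j k l
        - (∑ a, ∑ b, (1/2 : ℂ) * α a b * P a b j) * P i k l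
        + (∑ a, ∑ b, (1/2 : ℂ) * α a b * P a b k) * P i j l
        - (∑ a, ∑ b, (1/2 : ℂ) * α a b * P a b l) * P i j k = 0) ↔
    (∃ a b c : Fin 6 → ℂ, ∀ i j k : Fin 6,
        P i j k = Matrix.det !![a i, a j, a k; b i, b j, b k; c i, c j, c k]) := by
  obtain ⟨hA1, hA2⟩ := hP
  have hcyc : ∀ i j k, P i j k = P j k i := fun i j k => by
    linear_combination hA1 i j k - hA2 j i k
  have h0a : ∀ x y, P x x y = 0 := fun x y => by linear_combination (1/2 : ℂ) * hA1 x x y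
  have h0b : ∀ x y, P x y x = 0 := fun x y => by linear_combination hA2 x y x - h0a x y
  constructor
  · intro H
    have Pl : ∀ a b i j k l : Fin 6,
        P a b i * P j k l - P a b j * P i k l + P a b k * P i j l - P a b l * P i j k = 0 := by
      intro a b i j k l
      have hs : ∀ m : Fin 6, (∑ x, ∑ y, (1/2:ℂ) *
          ((if x = a then (if y = b then (1:ℂ) else 0) else 0)
            - (if x = b then (if y = a then (1:ℂ) else 0) else 0)) * P x y m) = P a b m := by
        intro m
        have h2 : (1/2:ℂ) * (P a b m - P b a m) = P a b m := by
          linear_combination (-(1/2):ℂ) * hA1 b a m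
        rw [← h2]
        simp [mul_sub, sub_mul, ite_mul, mul_ite, Finset.sum_sub_distrib,
          Finset.sum_ite_eq', mul_comm]
      have hh := H (fun x y => (if x = a then (if y = b then (1:ℂ) else 0) else 0)
            - (if x = b then (if y = a then (1:ℂ) else 0) else 0))
          (fun x y => by split_ifs <;> ring) i j k l
      simp only [hs] at hh
      linear_combination hh
    by_cases hz : ∀ i j k, P i j k = 0
    · exact ⟨0, 0, 0, fun i j k => by simp [hz, Matrix.det_fin_three]⟩
    · push_neg at hz
      obtain ⟨p, q, r, hd⟩ := hz
      have L1 : ∀ j k : Fin 6,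
          P p q r * P p j k = P p j r * P p q k - P p q j * P p k r := by
        intro j k
        linear_combination (-1 : ℂ) * Pl p j q k r p + P p j k * hcyc p q r
          - P p j r * hcyc p q k + P p q j * hcyc p k r + P k r p * hA2 p j q
          - P q k r * h0b p j
      have L2 : ∀ i j k : Fin 6,
          P p q r * P i j k = P i q r * P p j k - P j q r * P p i k + P k q r * P p i j := by
        intro i j k
        linear_combination Pl q r p i j k + P i j k * hcyc p q r - P p j k * hcyc i q r
          + P p i k * hcyc j q r - P p i j * hcyc k q r
      refine ⟨fun x => P x q r / P p q r, fun x => P p x r / P p q r, fun x => P p q x,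
        fun i j k => ?_⟩
      rw [show (P i j k : ℂ) = (P p q r * (P p q r * P i j k)) / (P p q r * P p q r) by
        field_simp]
      simp [Matrix.det_fin_three]
      field_simp
      linear_combination P p q r * L2 i j k + P i q r * L1 j k - P j q r * L1 i k
        + P k q r * L1 i j
  · rintro ⟨a, b, c, h⟩ α hα i j k l
    have key : ∀ m : Fin 6, (∑ x, ∑ y, (1/2:ℂ) * α x y * P x y m)
        = (∑ x, ∑ y, (1/2:ℂ) * α x y * (b x * c y - b y * c x)) * a m
        + ((∑ x, ∑ y, (1/2:ℂ) * α x y * (a y * c x - a x * c y)) * b m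
        + (∑ x, ∑ y, (1/2:ℂ) * α x y * (a x * b y - a y * b x)) * c m) := by
      intro m
      simp only [Finset.sum_mul, ← Finset.sum_add_distrib]
      refine Finset.sum_congr rfl fun x _ => Finset.sum_congr rfl fun y _ => ?_
      rw [h x y m]
      simp [Matrix.det_fin_three]
      try ring
    rw [key i, key j, key k, key l]
    have Qa : a i * P j k l - a j * P i k l + a k * P i j l - a l * P i j k = 0 := by
      simp only [h]
      simp [Matrix.det_fin_three]
      try ring
    have Qb : b i * P j k l - b j * P i k l + b k * P i j l - b l * P i j k = 0 := by
      simp only [h]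
      simp [Matrix.det_fin_three]
      try ring
    have Qc : c i * P j k l - c j * P i k l + c k * P i j l - c l * P i j k = 0 := by
      simp only [h]
      simp [Matrix.det_fin_three]
      try ring
    linear_combination (∑ x, ∑ y, (1/2:ℂ) * α x y * (b x * c y - b y * c x)) * Qa
      + (∑ x, ∑ y, (1/2:ℂ) * α x y * (a y * c x - a x * c y)) * Qb
      + (∑ x, ∑ y, (1/2:ℂ) * α x y * (a x * b y - a y * b x)) * Qc
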